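/- Every simplicial forest is acyclic in all positive homological degrees; i.e., for a simplicial forest Δ, the reduced homology groups H̃_i(Δ) vanish for all i ≥ 1 (the only possibly nonzero reduced homology is H̃_0, accounting for disconnectedness). -/

import Mathlib

noncomputable section
attribute [local instance] Classical.propDecidable

/-- The simplicial complex generated by a set of faces: all nonempty subsets. -/
def gen {V : Type} (S : Finset (Finset V)) : Finset (Finset V) :=
  S.biUnion fun F => F.powerset.filter (· ≠ ∅)

/-- The facets (maximal faces) of a complex given by its finite set of faces. -/
def facets {V : Type} (Δ : Finset (Finset V)) : Finset (Finset V) :=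
  Δ.filter fun F => ∀ G ∈ Δ, F ⊆ G → F = G

/-- A (finite, abstract) simplicial complex: nonempty faces, closed under nonempty subsets. -/
def IsComplex {V : Type} (Δ : Finset (Finset V)) : Prop :=
  ∅ ∉ Δ ∧ ∀ F ∈ Δ, ∀ G, G ⊆ F → G ≠ ∅ → G ∈ Δ

/-- `F` is a leaf of `Δ`: `F` is a facet which is either the only facet, or
there is another facet `G` (a joint) with `F ∩ (Δ ∖ F) ⊆ G`, i.e. the
intersection of `F` with any other facet is contained in `G`. -/
def IsLeaf {V : Type} (Δ : Finset (Finset V)) (F : Finset V) : Prop :=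
  F ∈ facets Δ ∧ (facets Δ = {F} ∨
    ∃ G ∈ facets Δ, G ≠ F ∧ ∀ H ∈ facets Δ, H ≠ F → F ∩ H ⊆ G)

def HasLeaf {V : Type} (Δ : Finset (Finset V)) : Prop := ∃ F, IsLeaf Δ F

/-- A forest: every nonempty subcollection (complex generated by a subset of the
facets) has a leaf. -/
def IsForest {V : Type} (Δ : Finset (Finset V)) : Prop :=
  ∀ S ⊆ facets Δ, S.Nonempty → HasLeaf (gen S)

/-- Vertex set of a complex. -/
def vtx {V : Type} (Δ : Finset (Finset V)) : Finset V := Δ.sup id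

/-- Connectedness: nonempty, and any two vertices are joined by a chain of faces. -/
def Conn {V : Type} (Δ : Finset (Finset V)) : Prop :=
  Δ.Nonempty ∧ ∀ u ∈ vtx Δ, ∀ v ∈ vtx Δ,
    Relation.ReflTransGen (fun a b => ∃ σ ∈ Δ, a ∈ σ ∧ b ∈ σ) u v

/-- A simplicial tree is a connected forest. -/
def IsTree {V : Type} (Δ : Finset (Finset V)) : Prop := Conn Δ ∧ IsForest Δ

/-- The group of reduced simplicial `(n-1)`-chains over `ℤ`: the free `ℤ`-module on
the faces of `Δ` of cardinality `n` (with the empty face included in degree `0`). -/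
abbrev RChain {V : Type} (Δ : Finset (Finset V)) (n : ℕ) :=
  {F : Finset V // (F ∈ Δ ∨ F = ∅) ∧ F.card = n} →₀ ℤ

/-- The simplicial boundary map of the (augmented) reduced chain complex of `Δ`. -/
noncomputable def bd {V : Type} [LinearOrder V] (Δ : Finset (Finset V)) (n : ℕ) :
    RChain Δ (n + 1) →ₗ[ℤ] RChain Δ n :=
  Finsupp.lsum ℤ fun F => LinearMap.toSpanSingleton ℤ (RChain Δ n)
    (∑ x ∈ F.1.attach,
      if h : ((F.1.erase x.1 ∈ Δ ∨ F.1.erase x.1 = ∅) ∧ (F.1.erase x.1).card = n) then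
        ((-1 : ℤ) ^ ((F.1.filter (· < x.1)).card)) • Finsupp.single ⟨F.1.erase x.1, h⟩ 1
      else 0)

/-- All reduced simplicial homology of `Δ` (over `ℤ`) vanishes: the augmentation
`bd Δ 0` is surjective (vanishing of `H̃₋₁`, i.e. nonemptiness) and every cycle is a
boundary in every degree. -/
def AcyclicAll {V : Type} [LinearOrder V] (Δ : Finset (Finset V)) : Prop :=
  Function.Surjective (bd Δ 0) ∧
    ∀ n : ℕ, ∀ c : RChain Δ (n + 1), bd Δ n c = 0 → ∃ b, bd Δ (n + 1) b = c

/-!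
Induct on the number of facets. Let `F` be a leaf with joint `G`, and split a cycle `c` of
positive degree as `y + x`, with `y` carried by the other facets and `x` by faces of `F` alone.
Then `z = ∂x = -∂y` is carried by faces of `F ∩ H` for other facets `H`, hence of `F ∩ G`.
Coning from a vertex `w ∈ F ∩ G` (`cone Δ w`, written `w * _`) gives `x = ∂(w * x) + w * z`,
while `y + w * z` is a cycle carried by the other facets, as `w * z` lives on `G`; by induction
it is a boundary, hence so is `c`. The faces of `z` are nonempty because `c` has positive
degree; in degree `0` a leaf disjoint from the other facets breaks the argument.
-/

abbrev Face {V : Type} (Δ : Finset (Finset V)) (n : ℕ) :=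
  {F : Finset V // (F ∈ Δ ∨ F = ∅) ∧ F.card = n}

section Sign

variable {V : Type} [LinearOrder V]

def faceSign (σ : Finset V) (x : V) : ℤ := (-1) ^ (σ.filter (· < x)).card

lemma faceSign_eq_faceSign_erase_mul {σ : Finset V} {x : V} (hx : x ∈ σ) (y : V) :
    faceSign σ y = faceSign (σ.erase x) y * if x < y then -1 else 1 := by
  unfold faceSign
  rw [Finset.filter_erase]
  split_ifs with h
  · rw [← Finset.card_erase_add_one (Finset.mem_filter.2 ⟨hx, h⟩), pow_succ]
  · rw [Finset.erase_eq_of_notMem (s := σ.filter (· < y)) fun hm => h (Finset.mem_filter.1 hm).2,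
      mul_one]

lemma faceSign_insert {σ : Finset V} {w : V} (hw : w ∉ σ) (y : V) :
    faceSign (insert w σ) y = faceSign σ y * if w < y then -1 else 1 := by
  rw [faceSign_eq_faceSign_erase_mul (Finset.mem_insert_self w σ), Finset.erase_insert hw]

lemma faceSign_mul_self (σ : Finset V) (x : V) : faceSign σ x * faceSign σ x = 1 := by
  rw [faceSign, ← pow_add]
  exact Even.neg_one_pow ⟨_, rfl⟩

lemma faceSign_erase_self (σ : Finset V) (x : V) : faceSign (σ.erase x) x = faceSign σ x := by
  rw [faceSign, faceSign, Finset.filter_erase,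
    Finset.erase_eq_of_notMem (s := σ.filter (· < x)) fun hm =>
      lt_irrefl x (Finset.mem_filter.1 hm).2]

lemma faceSign_insert_self (σ : Finset V) (w : V) : faceSign (insert w σ) w = faceSign σ w := by
  rw [faceSign, faceSign, Finset.filter_insert, if_neg (lt_irrefl w)]

lemma faceSign_mul_erase_add_swap_eq_zero {σ : Finset V} {x y : V} (hx : x ∈ σ) (hy : y ∈ σ)
    (hxy : x ≠ y) :
    faceSign σ x * faceSign (σ.erase x) y + faceSign σ y * faceSign (σ.erase y) x = 0 := by
  rw [faceSign_eq_faceSign_erase_mul hy x, faceSign_eq_faceSign_erase_mul hx y]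
  rcases hxy.lt_or_gt with h | h
  · rw [if_pos h, if_neg h.not_gt]; ring
  · rw [if_neg h.not_gt, if_pos h]; ring

lemma faceSign_mul_insert_add_mul_erase_eq_zero {σ : Finset V} {w x : V} (hw : w ∉ σ)
    (hx : x ∈ σ) :
    faceSign σ w * faceSign (insert w σ) x + faceSign σ x * faceSign (σ.erase x) w = 0 := by
  rw [faceSign_insert hw x, faceSign_eq_faceSign_erase_mul hx w]
  rcases (ne_of_mem_of_not_mem hx hw).lt_or_gt with h | h
  · rw [if_pos h, if_neg h.not_gt]; ring
  · rw [if_neg h.not_gt, if_pos h]; ring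

end Sign

lemma Finsupp.support_map_subset_biUnion {α β R : Type*} [Semiring R] [DecidableEq β]
    (f : (α →₀ R) →ₗ[R] (β →₀ R)) (c : α →₀ R) :
    (f c).support ⊆ c.support.biUnion fun σ => (f (Finsupp.single σ 1)).support := by
  conv_lhs => rw [← Finsupp.sum_single c]
  rw [map_finsuppSum]
  refine Finsupp.support_sum.trans (Finset.biUnion_mono fun σ _ => ?_)
  rw [← Finsupp.smul_single_one, map_smul]
  exact Finsupp.support_smul

section Chains

variable {V : Type} {Δ : Finset (Finset V)} {n : ℕ}

def faceChain (Δ : Finset (Finset V)) (n : ℕ) (τ : Finset V) : RChain Δ n :=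
  if h : (τ ∈ Δ ∨ τ = ∅) ∧ τ.card = n then Finsupp.single ⟨τ, h⟩ 1 else 0

lemma faceChain_of_face {τ : Finset V} (h : (τ ∈ Δ ∨ τ = ∅) ∧ τ.card = n) :
    faceChain Δ n τ = Finsupp.single ⟨τ, h⟩ 1 :=
  dif_pos h

lemma faceChain_of_not_face {τ : Finset V} (h : ¬((τ ∈ Δ ∨ τ = ∅) ∧ τ.card = n)) :
    faceChain Δ n τ = 0 :=
  dif_neg h

lemma eq_of_mem_support_faceChain {ρ : Finset V} {τ : Face Δ n}
    (h : τ ∈ (faceChain Δ n ρ).support) : τ.1 = ρ := by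
  unfold faceChain at h
  split at h
  · rw [Finset.mem_singleton.1 (Finsupp.support_single_subset h)]
  · simp at h

lemma Face.mem (σ : Face Δ (n + 1)) : σ.1 ∈ Δ :=
  σ.2.1.resolve_right fun h => by simpa [h] using σ.2.2

lemma Face.nonempty (σ : Face Δ (n + 1)) : σ.1.Nonempty :=
  Finset.card_pos.1 (by rw [σ.2.2]; exact n.succ_pos)

variable [LinearOrder V]

lemma bd_single (σ : Face Δ (n + 1)) :
    bd Δ n (Finsupp.single σ 1)
      = ∑ x ∈ σ.1, faceSign σ.1 x • faceChain Δ n (σ.1.erase x) := by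
  rw [bd, Finsupp.lsum_single, LinearMap.toSpanSingleton_apply, one_smul,
    ← Finset.sum_attach σ.1]
  refine Finset.sum_congr rfl fun x _ => ?_
  unfold faceChain faceSign
  split
  · rfl
  · exact (smul_zero _).symm

lemma bd_faceChain {τ : Finset V} (hτ : τ ∈ Δ) (hcard : τ.card = n + 1) :
    bd Δ n (faceChain Δ (n + 1) τ)
      = ∑ x ∈ τ, faceSign τ x • faceChain Δ n (τ.erase x) := by
  rw [faceChain_of_face ⟨Or.inl hτ, hcard⟩]
  exact bd_single ⟨τ, Or.inl hτ, hcard⟩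

lemma exists_superset_of_mem_support_bd {c : RChain Δ (n + 1)} {τ : Face Δ n}
    (hτ : τ ∈ (bd Δ n c).support) : ∃ σ ∈ c.support, τ.1 ⊆ σ.1 := by
  obtain ⟨σ, hσ, hτσ⟩ := Finset.mem_biUnion.1 (Finsupp.support_map_subset_biUnion _ c hτ)
  rw [bd_single] at hτσ
  obtain ⟨x, -, hx⟩ := Finset.mem_biUnion.1 (Finsupp.support_finsetSum hτσ)
  refine ⟨σ, hσ, ?_⟩
  rw [eq_of_mem_support_faceChain (Finsupp.support_smul hx)]
  exact Finset.erase_subset x σ.1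

lemma bd_bd_single (hΔ : IsComplex Δ) (σ : Face Δ (n + 1 + 1)) :
    bd Δ n (bd Δ (n + 1) (Finsupp.single σ 1)) = 0 := by
  have hface : ∀ x ∈ σ.1, σ.1.erase x ∈ Δ ∧ (σ.1.erase x).card = n + 1 := fun x hx => by
    have hcard : (σ.1.erase x).card = n + 1 := by rw [Finset.card_erase_of_mem hx, σ.2.2]; rfl
    refine ⟨hΔ.2 σ.1 σ.mem _ (Finset.erase_subset x σ.1) fun h => ?_, hcard⟩
    simp [h] at hcard
  rw [bd_single, map_sum, Finset.sum_congr rfl fun x hx => by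
    rw [map_zsmul, bd_faceChain (hface x hx).1 (hface x hx).2, Finset.smul_sum],
    ← Finset.sum_finset_product' σ.1.offDiag σ.1 (fun x => σ.1.erase x)
      (by simp [and_comm, eq_comm])]
  refine Finset.sum_involution (fun p _ => p.swap) (fun p hp => ?_) (fun p hp _ => ?_)
    (fun p hp => Finset.mem_offDiag.2 ?_) (fun p _ => rfl)
  all_goals obtain ⟨hx, hy, hxy⟩ := Finset.mem_offDiag.1 hp
  · rw [Prod.fst_swap, Prod.snd_swap, Finset.erase_right_comm, smul_smul, smul_smul, ← add_smul,
      faceSign_mul_erase_add_swap_eq_zero hx hy hxy, zero_smul]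
  · exact fun h => hxy (Prod.ext_iff.1 h).2
  · exact ⟨hy, hx, hxy.symm⟩

lemma bd_bd (hΔ : IsComplex Δ) (c : RChain Δ (n + 1 + 1)) : bd Δ n (bd Δ (n + 1) c) = 0 := by
  induction c using Finsupp.induction_linear with
  | zero => rw [map_zero, map_zero]
  | add f g hf hg => rw [map_add, map_add, hf, hg, add_zero]
  | single σ k => rw [← Finsupp.smul_single_one, map_smul, map_smul, bd_bd_single hΔ, smul_zero]

end Chains

section Cone

variable {V : Type} [LinearOrder V] {Δ : Finset (Finset V)} {n : ℕ} {w : V}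

def cone (Δ : Finset (Finset V)) (w : V) (n : ℕ) : RChain Δ n →ₗ[ℤ] RChain Δ (n + 1) :=
  Finsupp.lsum ℤ fun σ => LinearMap.toSpanSingleton ℤ (RChain Δ (n + 1))
    (if w ∈ σ.1 then 0 else faceSign σ.1 w • faceChain Δ (n + 1) (insert w σ.1))

lemma cone_single (σ : Face Δ n) :
    cone Δ w n (Finsupp.single σ 1)
      = if w ∈ σ.1 then 0 else faceSign σ.1 w • faceChain Δ (n + 1) (insert w σ.1) := by
  rw [cone, Finsupp.lsum_single, LinearMap.toSpanSingleton_apply, one_smul]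

lemma cone_faceChain (hΔ : IsComplex Δ) (τ : Finset V) :
    cone Δ w n (faceChain Δ n τ)
      = if w ∈ τ then 0 else faceSign τ w • faceChain Δ (n + 1) (insert w τ) := by
  by_cases hτ : (τ ∈ Δ ∨ τ = ∅) ∧ τ.card = n
  · rw [faceChain_of_face hτ, cone_single]
  rw [faceChain_of_not_face hτ, map_zero]
  split_ifs with hw
  · rfl
  rw [faceChain_of_not_face, smul_zero]
  rintro ⟨hmem, hcard⟩
  refine hτ ⟨?_, by rw [Finset.card_insert_of_notMem hw] at hcard; omega⟩
  rcases hmem with hmem | hmem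
  · by_cases hτ0 : τ = ∅
    · exact Or.inr hτ0
    · exact Or.inl (hΔ.2 _ hmem τ (Finset.subset_insert w τ) hτ0)
  · exact absurd hmem (Finset.insert_ne_empty w τ)

lemma exists_eq_insert_of_mem_support_cone {c : RChain Δ n} {τ : Face Δ (n + 1)}
    (hτ : τ ∈ (cone Δ w n c).support) : ∃ σ ∈ c.support, τ.1 = insert w σ.1 := by
  obtain ⟨σ, hσ, hτσ⟩ := Finset.mem_biUnion.1 (Finsupp.support_map_subset_biUnion _ c hτ)
  rw [cone_single] at hτσ
  split_ifs at hτσ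
  · simp at hτσ
  · exact ⟨σ, hσ, eq_of_mem_support_faceChain (Finsupp.support_smul hτσ)⟩

lemma cone_bd_single (hΔ : IsComplex Δ) (σ : Face Δ (n + 1)) :
    cone Δ w n (bd Δ n (Finsupp.single σ 1)) = ∑ x ∈ σ.1, if w ∈ σ.1.erase x then 0 else
      (faceSign σ.1 x * faceSign (σ.1.erase x) w) •
        faceChain Δ (n + 1) (insert w (σ.1.erase x)) := by
  rw [bd_single, map_sum]
  refine Finset.sum_congr rfl fun x _ => ?_
  rw [map_zsmul, cone_faceChain hΔ, smul_ite, smul_zero, smul_smul]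

lemma bd_cone_add_cone_bd_single (hΔ : IsComplex Δ) {F : Finset V} (hFΔ : F ∈ Δ)
    (hw : w ∈ F) (σ : Face Δ (n + 1)) (hσF : σ.1 ⊆ F) :
    bd Δ (n + 1) (cone Δ w (n + 1) (Finsupp.single σ 1))
      + cone Δ w n (bd Δ n (Finsupp.single σ 1)) = Finsupp.single σ 1 := by
  rw [cone_single, cone_bd_single hΔ]
  by_cases hwσ : w ∈ σ.1
  · rw [if_pos hwσ, map_zero, zero_add, Finset.sum_eq_single_of_mem w hwσ fun x _ hxw =>
      if_pos (Finset.mem_erase.2 ⟨Ne.symm hxw, hwσ⟩), if_neg (Finset.notMem_erase w σ.1),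
      faceSign_erase_self, faceSign_mul_self, one_smul, Finset.insert_erase hwσ,
      faceChain_of_face σ.2]
  have hinsΔ : insert w σ.1 ∈ Δ :=
    hΔ.2 F hFΔ _ (Finset.insert_subset hw hσF) (Finset.insert_ne_empty w σ.1)
  have hinscard : (insert w σ.1).card = n + 1 + 1 := by
    rw [Finset.card_insert_of_notMem hwσ, σ.2.2]
  rw [if_neg hwσ, map_zsmul, bd_faceChain hinsΔ hinscard, Finset.sum_insert hwσ,
    Finset.erase_insert hwσ, faceSign_insert_self, faceChain_of_face σ.2, smul_add, smul_smul,
    faceSign_mul_self, one_smul, Finset.smul_sum, add_assoc, ← Finset.sum_add_distrib]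
  conv_rhs => rw [← add_zero (Finsupp.single σ 1)]
  congr 1
  refine Finset.sum_eq_zero fun x hx => ?_
  rw [if_neg fun h => hwσ (Finset.mem_of_mem_erase h),
    Finset.erase_insert_of_ne (ne_of_mem_of_not_mem hx hwσ).symm, smul_smul, ← add_smul,
    faceSign_mul_insert_add_mul_erase_eq_zero hwσ hx, zero_smul]

lemma bd_cone_add_cone_bd (hΔ : IsComplex Δ) {F : Finset V} (hFΔ : F ∈ Δ) (hw : w ∈ F)
    (c : RChain Δ (n + 1)) (hc : ∀ σ ∈ c.support, σ.1 ⊆ F) :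
    bd Δ (n + 1) (cone Δ w (n + 1) c) + cone Δ w n (bd Δ n c) = c := by
  change (bd Δ (n + 1) ∘ₗ cone Δ w (n + 1) + cone Δ w n ∘ₗ bd Δ n) c = c
  conv_lhs => rw [← Finsupp.sum_single c]
  rw [map_finsuppSum]
  conv_rhs => rw [← Finsupp.sum_single c]
  refine Finset.sum_congr rfl fun σ hσ => ?_
  dsimp only
  rw [← Finsupp.smul_single_one, map_smul]
  exact congrArg _ (bd_cone_add_cone_bd_single hΔ hFΔ hw σ (hc σ hσ))

end Cone

section Facets

variable {V : Type} {Δ : Finset (Finset V)}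

lemma mem_gen {S : Finset (Finset V)} {A : Finset V} :
    A ∈ gen S ↔ ∃ F ∈ S, A ⊆ F ∧ A ≠ ∅ := by
  simp only [gen, Finset.mem_biUnion, Finset.mem_filter, Finset.mem_powerset]

lemma isAntichain_facets (Δ : Finset (Finset V)) :
    IsAntichain (· ⊆ ·) (facets Δ : Set (Finset V)) :=
  fun _ hA B hB hne hAB => hne ((Finset.mem_filter.1 hA).2 B (Finset.mem_filter.1 hB).1 hAB)

lemma exists_mem_facets_superset {A : Finset V} (hA : A ∈ Δ) : ∃ F ∈ facets Δ, A ⊆ F := by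
  obtain ⟨F, hAF, hF⟩ := Δ.exists_le_maximal hA
  exact ⟨F, Finset.mem_filter.2 ⟨hF.prop, fun G hG hFG => hF.eq_of_le hG hFG⟩, hAF⟩

lemma facets_gen {S : Finset (Finset V)} (hS : IsAntichain (· ⊆ ·) (S : Set (Finset V)))
    (h0 : ∅ ∉ S) : facets (gen S) = S := by
  have hself : ∀ A ∈ S, A ∈ gen S := fun A hA =>
    mem_gen.2 ⟨A, hA, subset_rfl, ne_of_mem_of_not_mem hA h0⟩
  ext A
  simp only [facets, Finset.mem_filter]
  constructor
  · rintro ⟨hA, hmax⟩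
    obtain ⟨F, hF, hAF, -⟩ := mem_gen.1 hA
    exact hmax F (hself F hF) hAF ▸ hF
  · intro hA
    refine ⟨hself A hA, fun G hG hAG => ?_⟩
    obtain ⟨F, hF, hGF, -⟩ := mem_gen.1 hG
    exact hAG.antisymm (hS.eq hA hF (hAG.trans hGF) ▸ hGF)

lemma exists_apex_of_isLeaf {S : Finset (Finset V)}
    (hS : IsAntichain (· ⊆ ·) (S : Set (Finset V))) (h0 : ∅ ∉ S) {F : Finset V}
    (hF : IsLeaf (gen S) F) :
    F ∈ S ∧ ∃ w ∈ F, ∀ H ∈ S.erase F,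
      (F ∩ H).Nonempty → ∃ G ∈ S.erase F, w ∈ G ∧ F ∩ H ⊆ G := by
  rw [IsLeaf, facets_gen hS h0] at hF
  obtain ⟨hFS, hleaf⟩ := hF
  refine ⟨hFS, ?_⟩
  obtain ⟨v, hv⟩ := Finset.nonempty_iff_ne_empty.2 (ne_of_mem_of_not_mem hFS h0)
  rcases hleaf with hone | ⟨G, hGS, hGF, hjoint⟩
  · exact ⟨v, hv, by simp [hone]⟩
  have hG : G ∈ S.erase F := Finset.mem_erase.2 ⟨hGF, hGS⟩
  by_cases hFG : (F ∩ G).Nonempty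
  · obtain ⟨w, hw⟩ := hFG
    rw [Finset.mem_inter] at hw
    exact ⟨w, hw.1, fun H hH _ =>
      ⟨G, hG, hw.2, hjoint H (Finset.mem_of_mem_erase hH) (Finset.ne_of_mem_erase hH)⟩⟩
  · refine ⟨v, hv, fun H hH ⟨a, ha⟩ => absurd ⟨a, ?_⟩ hFG⟩
    exact Finset.mem_inter.2 ⟨(Finset.mem_inter.1 ha).1,
      hjoint H (Finset.mem_of_mem_erase hH) (Finset.ne_of_mem_erase hH) ha⟩

end Facets

section Forest

variable {V : Type} [LinearOrder V] {Δ : Finset (Finset V)} {n : ℕ}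

def IsCarriedBy (c : RChain Δ n) (S : Finset (Finset V)) : Prop :=
  ∀ σ ∈ c.support, ∃ H ∈ S, σ.1 ⊆ H

lemma isCarriedBy_cone_bd {F : Finset V} {w : V} {S : Finset (Finset V)}
    (hw : ∀ H ∈ S, (F ∩ H).Nonempty → ∃ G ∈ S, w ∈ G ∧ F ∩ H ⊆ G)
    {x y : RChain Δ (n + 1 + 1)} (hxF : ∀ σ ∈ x.support, σ.1 ⊆ F) (hy : IsCarriedBy y S)
    (hcyc : bd Δ (n + 1) (y + x) = 0) : IsCarriedBy (cone Δ w (n + 1) (bd Δ (n + 1) x)) S := by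
  intro σ hσ
  obtain ⟨τ, hτ, hστ⟩ := exists_eq_insert_of_mem_support_cone hσ
  rw [hστ]
  have hτy : τ ∈ (bd Δ (n + 1) y).support := by
    rwa [add_eq_zero_iff_eq_neg.1 ((map_add _ y x).symm.trans hcyc), Finsupp.support_neg]
  obtain ⟨ρ, hρ, hτρ⟩ := exists_superset_of_mem_support_bd hτy
  obtain ⟨H, hH, hρH⟩ := hy ρ hρ
  obtain ⟨ρ', hρ', hτρ'⟩ := exists_superset_of_mem_support_bd hτ
  have hτFH : τ.1 ⊆ F ∩ H := Finset.subset_inter (hτρ'.trans (hxF ρ' hρ')) (hτρ.trans hρH)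
  obtain ⟨G, hG, hwG, hFHG⟩ := hw H hH ((Face.nonempty τ).mono hτFH)
  exact ⟨G, hG, Finset.insert_subset hwG (hτFH.trans hFHG)⟩

lemma exists_bd_eq_of_apex (hΔ : IsComplex Δ) {F : Finset V} (hFΔ : F ∈ Δ) {w : V}
    (hwF : w ∈ F) {S : Finset (Finset V)}
    (hw : ∀ H ∈ S, (F ∩ H).Nonempty → ∃ G ∈ S, w ∈ G ∧ F ∩ H ⊆ G)
    (ih : ∀ c : RChain Δ (n + 1 + 1), IsCarriedBy c S →
      bd Δ (n + 1) c = 0 → ∃ b, bd Δ (n + 1 + 1) b = c)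
    (c : RChain Δ (n + 1 + 1)) (hc : IsCarriedBy c (insert F S))
    (hcyc : bd Δ (n + 1) c = 0) : ∃ b, bd Δ (n + 1 + 1) b = c := by
  set y := c.filter fun σ => ∃ H ∈ S, σ.1 ⊆ H
  set x := c.filter fun σ => ¬∃ H ∈ S, σ.1 ⊆ H
  have hyx : y + x = c := Finsupp.filter_add_filter_not c _
  have hy : IsCarriedBy y S := fun σ hσ => by
    rw [Finsupp.support_filter, Finset.mem_filter] at hσ
    exact hσ.2
  have hxF : ∀ σ ∈ x.support, σ.1 ⊆ F := fun σ hσ => by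
    rw [Finsupp.support_filter, Finset.mem_filter] at hσ
    obtain ⟨H, hH, hσH⟩ := hc σ hσ.1
    rcases Finset.mem_insert.1 hH with rfl | hH
    · exact hσH
    · exact absurd ⟨H, hH, hσH⟩ hσ.2
  have hzF : ∀ τ ∈ (bd Δ (n + 1) x).support, τ.1 ⊆ F := fun τ hτ => by
    obtain ⟨σ, hσ, hτσ⟩ := exists_superset_of_mem_support_bd hτ
    exact hτσ.trans (hxF σ hσ)
  have hx := bd_cone_add_cone_bd hΔ hFΔ hwF x hxF
  have hz := bd_cone_add_cone_bd hΔ hFΔ hwF _ hzF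
  rw [bd_bd hΔ, map_zero, add_zero] at hz
  obtain ⟨b, hb⟩ := ih (y + cone Δ w (n + 1) (bd Δ (n + 1) x))
    (fun σ hσ => (Finset.mem_union.1 (Finsupp.support_add hσ)).elim (hy σ)
      (isCarriedBy_cone_bd hw hxF hy (hyx ▸ hcyc) σ))
    (by rw [map_add, hz, ← map_add, hyx, hcyc])
  refine ⟨b + cone Δ w (n + 1 + 1) x, ?_⟩
  rw [map_add, hb, add_assoc y, add_comm (cone Δ w (n + 1) _), hx, hyx]

theorem exists_bd_eq_of_isForest (hΔ : IsComplex Δ) (hfor : IsForest Δ) {S : Finset (Finset V)}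
    (hS : S ⊆ facets Δ) (c : RChain Δ (n + 1 + 1)) (hc : IsCarriedBy c S)
    (hcyc : bd Δ (n + 1) c = 0) : ∃ b, bd Δ (n + 1 + 1) b = c := by
  induction S using Finset.strongInduction generalizing c with
  | H S ih =>
  rcases S.eq_empty_or_nonempty with rfl | hSne
  · obtain rfl : c = 0 := Finsupp.support_eq_empty.1
      (Finset.eq_empty_of_forall_notMem fun σ hσ => by simpa using hc σ hσ)
    exact ⟨0, map_zero _⟩
  obtain ⟨F, hF⟩ := hfor S hS hSne
  obtain ⟨hFS, w, hwF, hw⟩ := exists_apex_of_isLeaf ((isAntichain_facets Δ).subset hS)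
    (fun h => hΔ.1 (Finset.mem_filter.1 (hS h)).1) hF
  refine exists_bd_eq_of_apex hΔ (Finset.mem_filter.1 (hS hFS)).1 hwF hw
    (fun c' => ih _ (Finset.erase_ssubset hFS) ((Finset.erase_subset F S).trans hS) c') c
    (by rwa [Finset.insert_erase hFS]) hcyc

end Forest

/-- Every simplicial forest is acyclic in all positive homological
degrees: for `i ≥ 1` every reduced `i`-cycle is a boundary (only `H̃₀` may fail to
vanish, accounting for disconnectedness). Faces of cardinality `i + 1` have
dimension `i`. -/
theorem forest_acyclic_positive_degrees {V : Type} [LinearOrder V]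
    (Δ : Finset (Finset V)) (hΔ : IsComplex Δ) (hF : IsForest Δ) :
    ∀ i : ℕ, 1 ≤ i → ∀ c : RChain Δ (i + 1), bd Δ i c = 0 →
      ∃ b : RChain Δ (i + 2), bd Δ (i + 1) b = c := by
  intro i hi c hcyc
  obtain ⟨j, rfl⟩ : ∃ j, i = j + 1 := ⟨i - 1, by omega⟩
  exact exists_bd_eq_of_isForest hΔ hF subset_rfl c
    (fun σ _ => exists_mem_facets_superset (Face.mem σ)) hcyc
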